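/- arXiv:2111.12763 — 2 statements merged into one kernel-verified Lean document; each statement's English description precedes it below -/
import Mathlib

section
/- For every bijective function f : Fin d → Fin S × Fin M, there exist weight matrices D : Fin d → Fin S → ℝ and E : Fin d → Fin M → ℝ such that for every input vector x : Fin d → ℝ and every index i : Fin d, writing (s, m) = f i, the multiplicative-layer output satisfies ∑ j, x j * D j s * E j m = x i. -/
theorem mult_layer_represents_permutation
    (d S M : ℕ) (f : Fin d → Fin S × Fin M) (hf : Function.Bijective f) :
    ∃ (D : Fin d → Fin S → ℝ) (E : Fin d → Fin M → ℝ),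
      ∀ (x : Fin d → ℝ) (i : Fin d),
        ∑ j, x j * D j (f i).1 * E j (f i).2 = x i := by
  refine ⟨fun j s => if (f j).1 = s then 1 else 0,
          fun j m => if (f j).2 = m then 1 else 0, fun x i => ?_⟩
  rw [Finset.sum_eq_single i]
  · simp
  · intro j _ hj
    have : f j ≠ f i := fun h => hj (hf.1 h)
    rcases eq_or_ne (f j).1 (f i).1 with h1 | h1
    · have h2 : (f j).2 ≠ (f i).2 := fun h2 => this (Prod.ext h1 h2)
      simp [h2]
    · simp [h1]
  · simp
end

section
/- For every bijective function f : Fin d → Fin S × Fin M, there exist weight matrices D : Fin d → Fin S → ℝ and E : Fin d → Fin M → ℝ such that the linear map from ℝ^d to ℝ^{Fin S × Fin M} sending x to the function (s, m) ↦ ∑ i, x i * D i s * E i m is a linear equivalence (a bijective linear map), whose inverse sends y to the vector i ↦ y (f i). -/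
theorem mult_layer_linear_equiv
    (d S M : ℕ) (f : Fin d → Fin S × Fin M) (hf : Function.Bijective f) :
    ∃ (D : Fin d → Fin S → ℝ) (E : Fin d → Fin M → ℝ)
      (L : (Fin d → ℝ) ≃ₗ[ℝ] (Fin S × Fin M → ℝ)),
        (∀ (x : Fin d → ℝ) (s : Fin S) (m : Fin M),
          L x (s, m) = ∑ i, x i * D i s * E i m) ∧
        (∀ (y : Fin S × Fin M → ℝ) (i : Fin d), L.symm y i = y (f i)) := by
  set e : Fin d ≃ Fin S × Fin M := Equiv.ofBijective f hf with he
  refine ⟨fun i s => if (f i).1 = s then 1 else 0,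
    fun i m => if (f i).2 = m then 1 else 0,
    (LinearEquiv.funCongrLeft ℝ ℝ e).symm, ?_, ?_⟩
  · intro x s m
    have hL : (LinearEquiv.funCongrLeft ℝ ℝ e).symm x (s, m) = x (e.symm (s, m)) := rfl
    rw [hL]
    rw [Finset.sum_eq_single (e.symm (s, m))]
    · have h : f (e.symm (s, m)) = (s, m) := e.apply_symm_apply (s, m)
      simp [h]
    · intro i _ hi
      have hne : f i ≠ (s, m) := fun h => hi (by rw [← h]; exact (e.symm_apply_apply i).symm)
      by_cases h1 : (f i).1 = s
      · have h2 : (f i).2 ≠ m := fun h2 => hne (Prod.ext h1 h2)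
        simp [h2]
      · simp [h1]
    · intro h; exact absurd (Finset.mem_univ _) h
  · intro y i; rfl
end
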